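/- Let m, q ≥ 2 and define C(k) = k(m(q - q^3)(k + mq) + m^2 q^2 - 1)/(k + mq) - m^2 q (q^3 - 2q^2 + 1) and c(k) = (m^2 - 1) q (k + mq - m)/(q(k + mq - m) + m), for rational k with k ≠ -mq and q(k+mq-m)+m ≠ 0. Then the rational solutions of C(k) = c(k) are exactly k = -mq^2/(q+1), k = (-mq^2 + mq - 1)/q, and k = (-mq^2 + mq + 1)/q. -/

import Mathlib

/-!
Clearing the two denominators turns `C(k) = c(k)` into a cubic equation in `k`, and the
difference of the cross-multiplied sides factors as `-m (q - 1)` times a product of three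
linear factors in `k`. For `m ≠ 0` and `q ≠ 1` the conformal levels are therefore the roots
of those three factors.
-/

section ConformalLevel

variable {K : Type*} [Field K]

/-- The central charge `C(k)` of the rectangular W-algebra `W^k(sl(mq), x, f_{[m,q]})`. -/
def rectangularWCentralCharge (m q k : K) : K :=
  k * (m * (q - q ^ 3) * (k + m * q) + m ^ 2 * q ^ 2 - 1) / (k + m * q)
    - m ^ 2 * q * (q ^ 3 - 2 * q ^ 2 + 1)

/-- The Sugawara central charge `c(k)` of `V^{k₁}(sl(m))` at `k₁ = q k + m q² - m q`. -/
def sugawaraCentralCharge (m q k : K) : K :=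
  (m ^ 2 - 1) * q * (k + m * q - m) / (q * (k + m * q - m) + m)

theorem centralCharge_cross_mul_sub (m q k : K) :
    (k * (m * (q - q ^ 3) * (k + m * q) + m ^ 2 * q ^ 2 - 1)
        - (k + m * q) * (m ^ 2 * q * (q ^ 3 - 2 * q ^ 2 + 1))) * (q * (k + m * q - m) + m)
      - (m ^ 2 - 1) * q * (k + m * q - m) * (k + m * q)
      = -(m * (q - 1)) * (((q + 1) * k + m * q ^ 2)
          * ((q * k + (m * q ^ 2 - m * q + 1)) * (q * k + (m * q ^ 2 - m * q - 1)))) := by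
  ring

theorem mul_add_eq_zero_iff_eq_div {a b c k : K} (ha : a ≠ 0) (hc : c = -b) :
    a * k + b = 0 ↔ k = c / a := by
  rw [eq_div_iff ha, hc]
  constructor <;> intro h <;> linear_combination h

theorem rectangularWCentralCharge_eq_sugawara_iff {m q k : K} (hm : m ≠ 0) (hq : q ≠ 1)
    (hq' : q + 1 ≠ 0) (hq₀ : q ≠ 0) (hk : k + m * q ≠ 0) (hd : q * (k + m * q - m) + m ≠ 0) :
    rectangularWCentralCharge m q k = sugawaraCentralCharge m q k ↔
      (k = -(m * q ^ 2) / (q + 1)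
        ∨ k = (-m * q ^ 2 + m * q - 1) / q
        ∨ k = (-m * q ^ 2 + m * q + 1) / q) := by
  have hmq : -(m * (q - 1)) ≠ 0 := neg_ne_zero.2 (mul_ne_zero hm (sub_ne_zero.2 hq))
  rw [rectangularWCentralCharge, sugawaraCentralCharge, div_sub' hk, div_eq_div_iff hk hd,
    ← sub_eq_zero, centralCharge_cross_mul_sub, mul_eq_zero, or_iff_right hmq, mul_eq_zero,
    mul_eq_zero]
  exact (mul_add_eq_zero_iff_eq_div hq' rfl).or <|
    (mul_add_eq_zero_iff_eq_div hq₀ (by ring)).or (mul_add_eq_zero_iff_eq_div hq₀ (by ring))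

end ConformalLevel

/-- equality of the central charge of the rectangular W-algebra
`W^k(sl(mq), x, f_{[m,q]})` with the Sugawara central charge of its affine part
characterizes the three conformal levels. -/
theorem stmt17 (m q : ℕ) (hm : 2 ≤ m) (hq : 2 ≤ q) (k : ℚ)
    (h1 : k ≠ -((m : ℚ) * q))
    (h2 : (q : ℚ) * (k + m * q - m) + m ≠ 0) :
    (k * ((m : ℚ) * ((q : ℚ) - (q : ℚ) ^ 3) * (k + m * q) + (m : ℚ) ^ 2 * (q : ℚ) ^ 2 - 1)
        / (k + m * q)
        - (m : ℚ) ^ 2 * q * ((q : ℚ) ^ 3 - 2 * (q : ℚ) ^ 2 + 1)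
      = ((m : ℚ) ^ 2 - 1) * q * (k + m * q - m) / ((q : ℚ) * (k + m * q - m) + m))
    ↔ (k = -((m : ℚ) * (q : ℚ) ^ 2) / ((q : ℚ) + 1)
        ∨ k = (-(m : ℚ) * (q : ℚ) ^ 2 + m * q - 1) / q
        ∨ k = (-(m : ℚ) * (q : ℚ) ^ 2 + m * q + 1) / q) := by
  have hm₀ : (m : ℚ) ≠ 0 := Nat.cast_ne_zero.2 (by omega)
  have hq₀ : (q : ℚ) ≠ 0 := Nat.cast_ne_zero.2 (by omega)
  have hq₁ : (q : ℚ) ≠ 1 := Nat.cast_ne_one.2 (by omega)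
  have hq' : (q : ℚ) + 1 ≠ 0 := by positivity
  have hk : k + m * q ≠ 0 := fun h => h1 (eq_neg_of_add_eq_zero_left h)
  exact rectangularWCentralCharge_eq_sugawara_iff hm₀ hq₁ hq' hq₀ hk h2
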